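/- arXiv:1704.07473 — 2 statements merged into one kernel-verified Lean document; each statement's English description precedes it below -/
import Mathlib

section
/- Let A_1A_2A_3 be a non-degenerate triangle in ℝ² and A_0 a point in its interior; write α_{i0j} = ∠A_iA_0A_j, so that α_{102} + α_{103} + α_{203} = 2π. Let c > 0, B̄_0 ≥ 0, and suppose B̄_1, B̄_2, B̄_3 > 0 satisfy B̄_1 + B̄_2 + B̄_3 = c, B̄_1 + B̄_2 = B̄_3 + B̄_0, and A_0 minimizes X ↦ Σ_{i=1}^3 B̄_i‖X − A_i‖. Then B̄_3 = (c − B̄_0)/2, B̄_2 = (sin α_{103}/sin α_{102})·(c − B̄_0)/2, and B̄_1 = −(sin(α_{103} + α_{102})/sin α_{102})·(c − B̄_0)/2 (which equals (sin α_{203}/sin α_{102})·(c − B̄_0)/2). In particular the weights are not determined by A_0 and c alone: they depend on the residual weight B̄_0 (negative answer to the inverse mixed weighted Fermat–Torricelli problem for three non-collinear points). -/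
/-!
At an interior minimizer `A₀` the objective is differentiable, so the weighted unit vectors
`uᵢ` pointing from `A₀` to the vertices balance: `∑ B̄ᵢ uᵢ = 0`. Applying the area form
`ω(uᵢ, ·)` to this balance gives the law of sines `B̄ⱼ sin αᵢ₀ⱼ = B̄ₖ sin αᵢ₀ₖ`, and its inner
product with `u₁` gives `B̄₁ + B̄₂ cos α₁₀₂ + B̄₃ cos α₁₀₃ = 0`; together they yield
`sin (α₁₀₃ + α₁₀₂) = -sin α₂₀₃`. Non-collinearity of the vertices keeps `sin α₁₀₂ ≠ 0`, and
`B̄₃ = (c - B̄₀) / 2` is just the two linear constraints on the weights.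
-/

open EuclideanGeometry Module Real

section Calculus

variable {E : Type*} [NormedAddCommGroup E] [InnerProductSpace ℝ E]

theorem hasFDerivAt_norm {x : E} (hx : x ≠ 0) :
    HasFDerivAt (‖·‖) (‖x‖⁻¹ • innerSL ℝ x) x := by
  have hsqrt : HasDerivAt Real.sqrt (1 / (2 * √(‖x‖ ^ 2))) (‖x‖ ^ 2) :=
    Real.hasDerivAt_sqrt (pow_pos (norm_pos_iff.mpr hx) 2).ne'
  have h := hsqrt.comp_hasFDerivAt x (hasStrictFDerivAt_norm_sq x).hasFDerivAt
  rw [show (Real.sqrt ∘ fun y : E => ‖y‖ ^ 2) = fun y => ‖y‖ by ext y; simp,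
    sqrt_sq (norm_nonneg x)] at h
  refine h.congr_fderiv ?_
  ext y
  simp only [smul_apply, innerSL_apply_apply, smul_eq_mul, nsmul_eq_mul]
  ring

theorem IsLocalMin.sum_smul_inv_norm_smul_sub_eq_zero {ι : Type*} [Fintype ι] {w : ι → ℝ}
    {p : ι → E} {x : E} (hmin : IsLocalMin (fun X => ∑ i, w i * ‖X - p i‖) x)
    (hx : ∀ i, x ≠ p i) :
    ∑ i, w i • (‖p i - x‖⁻¹ • (p i - x)) = 0 := by
  have hderiv : HasFDerivAt (fun X => ∑ i, w i * ‖X - p i‖)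
      (∑ i, w i • (‖x - p i‖⁻¹ • innerSL ℝ (x - p i))) x :=
    HasFDerivAt.fun_sum fun i _ =>
      ((hasFDerivAt_norm (sub_ne_zero.mpr (hx i))).comp x
        ((hasFDerivAt_id x).sub_const (p i))).const_mul (w i)
  set v := ∑ i, w i • (‖x - p i‖⁻¹ • (x - p i))
  have hv : innerSL ℝ v = ∑ i, w i • (‖x - p i‖⁻¹ • innerSL ℝ (x - p i)) := by
    simp only [v, map_sum, map_smul]
  have hv0 : v = 0 := by
    rw [← norm_eq_zero, ← innerSL_apply_norm ℝ v, hv, hmin.hasFDerivAt_eq_zero hderiv,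
      norm_zero]
  calc ∑ i, w i • (‖p i - x‖⁻¹ • (p i - x)) = -v := by
        rw [← Finset.sum_neg_distrib]
        refine Finset.sum_congr rfl fun i _ => ?_
        rw [norm_sub_rev, ← neg_sub x (p i), smul_neg, smul_neg]
    _ = 0 := by rw [hv0, neg_zero]

end Calculus

theorem AffineIndependent.ne_of_mem_interior_convexHull {ι E : Type*} [Finite ι] [Nontrivial ι]
    [NormedAddCommGroup E] [NormedSpace ℝ E] [FiniteDimensional ℝ E] {p : ι → E}
    (hp : AffineIndependent ℝ p) {x : E} (hx : x ∈ interior (convexHull ℝ (Set.range p)))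
    (i : ι) : x ≠ p i := by
  let b : AffineBasis ι ℝ E :=
    ⟨p, hp, interior_convexHull_nonempty_iff_affineSpan_eq_top.mp ⟨x, hx⟩⟩
  obtain ⟨j, hj⟩ := exists_ne i
  rintro rfl
  have hpos : 0 < b.coord j (b i) := (b.interior_convexHull ▸ hx : _) j
  exact hpos.ne' (b.coord_apply_ne hj)

theorem collinear_of_sin_angle_eq_zero {V P : Type*} [NormedAddCommGroup V]
    [InnerProductSpace ℝ V] [MetricSpace P] [NormedAddTorsor V P] {p p₁ p₂ p₃ : P}
    (h₁ : p₁ ≠ p) (h₂ : sin (∠ p₁ p p₂) = 0) (h₃ : sin (∠ p₁ p p₃) = 0) :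
    Collinear ℝ {p₁, p₂, p₃} := by
  have hline : ∀ q, sin (∠ p₁ p q) = 0 → q ∈ line[ℝ, p₁, p] := fun q hq =>
    (collinear_iff_eq_or_eq_or_sin_eq_zero.mpr (.inr (.inr hq))).mem_affineSpan_of_mem_of_ne
      (by simp) (by simp) (by simp) h₁
  refine (collinear_insert_insert_of_mem_affineSpan_pair (hline _ h₂) (hline _ h₃)).subset ?_
  intro q hq
  simp only [Set.mem_insert_iff, Set.mem_singleton_iff] at hq ⊢
  tauto

namespace InnerProductGeometry

variable {V : Type*} [NormedAddCommGroup V] [InnerProductSpace ℝ V]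

theorem angle_inv_norm_smul_inv_norm_smul (x y : V) :
    angle (‖x‖⁻¹ • x) (‖y‖⁻¹ • y) = angle x y := by
  rcases eq_or_ne x 0 with rfl | hx
  · simp
  rcases eq_or_ne y 0 with rfl | hy
  · simp
  rw [angle_smul_left_of_pos _ _ (inv_pos.mpr (norm_pos_iff.mpr hx)),
    angle_smul_right_of_pos _ _ (inv_pos.mpr (norm_pos_iff.mpr hy))]

variable [Fact (finrank ℝ V = 2)]

theorem _root_.Orientation.abs_areaForm_eq_sin_angle_mul (o : Orientation ℝ V (Fin 2))
    (x y : V) : |o.areaForm x y| = sin (angle x y) * (‖x‖ * ‖y‖) := by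
  rw [sin_angle_mul_norm_mul_norm, real_inner_self_eq_norm_sq, real_inner_self_eq_norm_sq,
    ← Real.sqrt_sq_eq_abs]
  congr 1
  linear_combination o.inner_sq_add_areaForm_sq x y

variable {x y z : V} {a b c : ℝ}

theorem mul_sin_angle_eq_of_smul_add_smul_add_smul_eq_zero (hb : 0 ≤ b) (hc : 0 ≤ c)
    (hx : ‖x‖ = 1) (hy : ‖y‖ = 1) (hz : ‖z‖ = 1) (h : a • x + b • y + c • z = 0) :
    b * sin (angle x y) = c * sin (angle x z) := by
  have : FiniteDimensional ℝ V := .of_fact_finrank_eq_two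
  let o : Orientation ℝ V (Fin 2) := (finBasisOfFinrankEq ℝ V Fact.out).orientation
  have hω : b * o.areaForm x y = -(c * o.areaForm x z) := by
    have := congrArg (o.areaForm x) h
    simp only [map_add, map_smul, o.areaForm_apply_self, map_zero, smul_eq_mul, mul_zero,
      zero_add] at this
    linarith
  have := congrArg abs hω
  rwa [abs_neg, abs_mul, abs_mul, abs_of_nonneg hb, abs_of_nonneg hc,
    o.abs_areaForm_eq_sin_angle_mul, o.abs_areaForm_eq_sin_angle_mul, hx, hy, hz, one_mul,
    mul_one, mul_one] at this

theorem sin_angle_add_angle_of_smul_add_smul_add_smul_eq_zero (ha : 0 ≤ a) (hb : 0 ≤ b)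
    (hc : 0 < c) (hx : ‖x‖ = 1) (hy : ‖y‖ = 1) (hz : ‖z‖ = 1)
    (h : a • x + b • y + c • z = 0) :
    sin (angle x z + angle x y) = -sin (angle y z) := by
  have hxz := mul_sin_angle_eq_of_smul_add_smul_add_smul_eq_zero hb hc.le hx hy hz h
  have hyz := mul_sin_angle_eq_of_smul_add_smul_add_smul_eq_zero ha hc.le hy hx hz
    (by rw [← h]; abel)
  have hcos : a + b * cos (angle x y) + c * cos (angle x z) = 0 := by
    have := congrArg (inner ℝ x) h
    simp only [inner_add_right, inner_smul_right, real_inner_self_eq_norm_sq, hx,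
      inner_zero_right] at this
    rw [cos_angle, cos_angle, hx, hy, hz]
    simpa using this
  rw [sin_add, angle_comm y x] at *
  -- both sides, multiplied by `c`, equal `-a * sin (angle x y)`
  refine mul_left_cancel₀ hc.ne' ?_
  linear_combination (-cos (angle x y)) * hxz + sin (angle x y) * hcos - hyz

end InnerProductGeometry

-- `A 0, A 1, A 2` are the paper's `A₁, A₂, A₃`, and `B i` the weight at `A i`.
theorem inverse_mixed_weighted_fermat_torricelli_triangle_general
    (A : Fin 3 → EuclideanSpace ℝ (Fin 2))
    (hA : AffineIndependent ℝ A)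
    (A₀ : EuclideanSpace ℝ (Fin 2))
    (hA₀ : A₀ ∈ interior (convexHull ℝ (Set.range A)))
    (c B₀ : ℝ)
    (B : Fin 3 → ℝ) (hB : ∀ i, 0 < B i)
    (hsum : B 0 + B 1 + B 2 = c)
    (hflow : B 0 + B 1 = B 2 + B₀)
    (hmin : ∀ X : EuclideanSpace ℝ (Fin 2),
      ∑ i, B i * ‖A₀ - A i‖ ≤ ∑ i, B i * ‖X - A i‖) :
    B 2 = (c - B₀) / 2 ∧
    B 1 = (Real.sin (∠ (A 0) A₀ (A 2)) / Real.sin (∠ (A 0) A₀ (A 1))) * ((c - B₀) / 2) ∧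
    B 0 = -(Real.sin (∠ (A 0) A₀ (A 2) + ∠ (A 0) A₀ (A 1))
            / Real.sin (∠ (A 0) A₀ (A 1))) * ((c - B₀) / 2) ∧
    B 0 = (Real.sin (∠ (A 1) A₀ (A 2)) / Real.sin (∠ (A 0) A₀ (A 1))) * ((c - B₀) / 2) := by
  have : Fact (finrank ℝ (EuclideanSpace ℝ (Fin 2)) = 2) := ⟨finrank_euclideanSpace_fin⟩
  have hne : ∀ i, A₀ ≠ A i := hA.ne_of_mem_interior_convexHull hA₀
  set u := fun i => ‖A i - A₀‖⁻¹ • (A i - A₀)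
  have hunit : ∀ i, ‖u i‖ = 1 := fun i => norm_smul_inv_norm (sub_ne_zero.mpr (hne i).symm)
  have hbal : B 0 • u 0 + B 1 • u 1 + B 2 • u 2 = 0 := by
    simpa [Fin.sum_univ_three] using
      IsLocalMin.sum_smul_inv_norm_smul_sub_eq_zero (Filter.Eventually.of_forall hmin) hne
  have hangle (i j) : ∠ (A i) A₀ (A j) = InnerProductGeometry.angle (u i) (u j) :=
    (InnerProductGeometry.angle_inv_norm_smul_inv_norm_smul _ _).symm
  have h12 := InnerProductGeometry.mul_sin_angle_eq_of_smul_add_smul_add_smul_eq_zero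
    (hB 1).le (hB 2).le (hunit 0) (hunit 1) (hunit 2) hbal
  have h02 := InnerProductGeometry.mul_sin_angle_eq_of_smul_add_smul_add_smul_eq_zero
    (hB 0).le (hB 2).le (hunit 1) (hunit 0) (hunit 2) (by rw [← hbal]; abel)
  have hadd := InnerProductGeometry.sin_angle_add_angle_of_smul_add_smul_add_smul_eq_zero
    (hB 0).le (hB 1).le (hB 2) (hunit 0) (hunit 1) (hunit 2) hbal
  have hsin : sin (InnerProductGeometry.angle (u 0) (u 1)) ≠ 0 := by
    intro h0
    rw [h0, mul_zero, zero_eq_mul, or_iff_right (hB 2).ne'] at h12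
    have hcol := collinear_of_sin_angle_eq_zero (hne 0).symm (by rw [hangle, h0])
      (by rw [hangle, h12])
    refine affineIndependent_iff_not_collinear.mp hA (hcol.subset ?_)
    rintro _ ⟨i, rfl⟩
    fin_cases i <;> simp
  have hB2 : B 2 = (c - B₀) / 2 := by linarith
  refine ⟨hB2, ?_⟩
  rw [← hB2]
  simp only [hangle, hadd, InnerProductGeometry.angle_comm (u 1) (u 0)] at h02 ⊢
  refine ⟨?_, ?_, ?_⟩ <;> field_simp <;> linarith

/-- Negative answer to the inverse mixed weighted Fermat–Torricelli problem for three
non-collinear points: if `A₀` is interior to the triangle `A₁A₂A₃` and the positive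
weights satisfy `B̄₁+B̄₂+B̄₃ = c`, `B̄₁+B̄₂ = B̄₃+B̄₀`, and `A₀` minimizes
`X ↦ ∑ B̄ᵢ‖X − Aᵢ‖`, then the weights are given by explicit formulas depending on the
residual weight `B̄₀`. Indices are shifted: `A 0, A 1, A 2` are `A₁, A₂, A₃`. -/
theorem inverse_mixed_weighted_fermat_torricelli_triangle
    (A : Fin 3 → EuclideanSpace ℝ (Fin 2))
    (hA : AffineIndependent ℝ A)
    (A₀ : EuclideanSpace ℝ (Fin 2))
    (hA₀ : A₀ ∈ interior (convexHull ℝ (Set.range A)))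
    (c B₀ : ℝ) (hc : 0 < c) (hB₀ : 0 ≤ B₀)
    (B : Fin 3 → ℝ) (hB : ∀ i, 0 < B i)
    (hsum : B 0 + B 1 + B 2 = c)
    (hflow : B 0 + B 1 = B 2 + B₀)
    (hmin : ∀ X : EuclideanSpace ℝ (Fin 2),
      ∑ i, B i * ‖A₀ - A i‖ ≤ ∑ i, B i * ‖X - A i‖) :
    B 2 = (c - B₀) / 2 ∧
    B 1 = (Real.sin (∠ (A 0) A₀ (A 2)) / Real.sin (∠ (A 0) A₀ (A 1))) * ((c - B₀) / 2) ∧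
    B 0 = -(Real.sin (∠ (A 0) A₀ (A 2) + ∠ (A 0) A₀ (A 1))
            / Real.sin (∠ (A 0) A₀ (A 1))) * ((c - B₀) / 2) ∧
    B 0 = (Real.sin (∠ (A 1) A₀ (A 2)) / Real.sin (∠ (A 0) A₀ (A 1))) * ((c - B₀) / 2) :=
  inverse_mixed_weighted_fermat_torricelli_triangle_general A hA A₀ hA₀ c B₀ B hB hsum hflow hmin
end

section
/- Let A_1A_2A_3 be a non-degenerate triangle in ℝ² and A_0 a point in its interior with ∠A_1A_0A_2 = ∠A_1A_0A_3 = 120° (hence also ∠A_2A_0A_3 = 120°). If B̄_1, B̄_2, B̄_3 > 0 satisfy B̄_1 + B̄_2 + B̄_3 = 1 and B̄_1 + B̄_2 = B̄_3 + 1/3, and A_0 minimizes X ↦ Σ_{i=1}^3 B̄_i‖X − A_i‖, then B̄_1 = B̄_2 = B̄_3 = 1/3. -/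
/-!
In the plane, the Lagrange identity `⟪u, v⟫⟪u, w⟫ + ω(u, v) ω(u, w) = ‖u‖² ⟪v, w⟫` shows that two
rays making the same angle `θ` with a third ray either coincide or make the angle `2θ` (mod `2π`)
with each other. Rays from an interior point to two distinct vertices never coincide, since
the barycentric coordinate of the third vertex vanishes on the line through the other two; so
`cos ∠A₂A₀A₃ = cos (4π/3) = cos (2π/3)`.

At an interior minimiser the weighted unit vectors `eᵢ` towards the vertices sum to zero. Their
pairwise inner products are all `cos (2π/3) = -1/2`, so pairing the relation with `eᵢ` gives
`(3/2) B̄ᵢ = (1/2) ∑ B̄ⱼ` for every `i`: the weights are equal, hence `1/3` each.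
-/

open EuclideanGeometry InnerProductGeometry NormedSpace Module Real
open scoped RealInnerProductSpace

section Plane

variable {V : Type*} [NormedAddCommGroup V] [InnerProductSpace ℝ V] [Fact (finrank ℝ V = 2)]

theorem InnerProductGeometry.inner_eq_or_eq_cos_two_mul_of_angle_eq {u v w : V} (hu : u ≠ 0)
    (h : angle u v = angle u w) :
    ⟪v, w⟫ = ‖v‖ * ‖w‖ ∨ ⟪v, w⟫ = cos (2 * angle u v) * (‖v‖ * ‖w‖) := by
  have := FiniteDimensional.of_fact_finrank_eq_two (K := ℝ) (V := V)
  let o : Orientation ℝ V (Fin 2) := (finBasisOfFinrankEq ℝ V Fact.out).orientation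
  set θ := angle u v
  have huv : ⟪u, v⟫ = cos θ * (‖u‖ * ‖v‖) := (cos_angle_mul_norm_mul_norm u v).symm
  have huw : ⟪u, w⟫ = cos θ * (‖u‖ * ‖w‖) := by
    rw [h]; exact (cos_angle_mul_norm_mul_norm u w).symm
  have hsin := sin_sq_add_cos_sq θ
  have hωv : o.areaForm u v ^ 2 = (sin θ * (‖u‖ * ‖v‖)) ^ 2 := by
    linear_combination o.inner_sq_add_areaForm_sq u v - huv * (⟪u, v⟫ + cos θ * (‖u‖ * ‖v‖))
      - (‖u‖ * ‖v‖) ^ 2 * hsin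
  have hωw : o.areaForm u w ^ 2 = (sin θ * (‖u‖ * ‖w‖)) ^ 2 := by
    linear_combination o.inner_sq_add_areaForm_sq u w - huw * (⟪u, w⟫ + cos θ * (‖u‖ * ‖w‖))
      - (‖u‖ * ‖w‖) ^ 2 * hsin
  have hu2 : ‖u‖ ^ 2 ≠ 0 := by positivity
  have hlagrange := o.inner_mul_inner_add_areaForm_mul_areaForm u v w
  rw [huv, huw] at hlagrange
  obtain hω | hω := sq_eq_sq_iff_eq_or_eq_neg.1 (show
      (o.areaForm u v * o.areaForm u w) ^ 2 = (sin θ ^ 2 * ‖u‖ ^ 2 * (‖v‖ * ‖w‖)) ^ 2 by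
    rw [mul_pow, hωv, hωw]; ring)
  · left
    refine mul_left_cancel₀ hu2 ?_
    linear_combination -hlagrange + hω + ‖u‖ ^ 2 * (‖v‖ * ‖w‖) * hsin
  · right
    refine mul_left_cancel₀ hu2 ?_
    rw [cos_two_mul, ← hsin]
    linear_combination -hlagrange + hω

variable {P : Type*} [MetricSpace P] [NormedAddTorsor V P]

theorem EuclideanGeometry.angle_eq_zero_or_cos_eq_cos_two_mul_of_angle_eq {a b c p : P}
    (ha : a ≠ p) (hb : b ≠ p) (hc : c ≠ p) (h : ∠ a p b = ∠ a p c) :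
    ∠ b p c = 0 ∨ cos (∠ b p c) = cos (2 * ∠ a p b) := by
  have hb' : b -ᵥ p ≠ 0 := vsub_ne_zero.2 hb
  have hc' : c -ᵥ p ≠ 0 := vsub_ne_zero.2 hc
  refine (inner_eq_or_eq_cos_two_mul_of_angle_eq (vsub_ne_zero.2 ha) h).imp
    (inner_eq_mul_norm_iff_angle_eq_zero hb' hc').1 fun hbc => ?_
  rw [angle, cos_angle, hbc, mul_div_cancel_right₀ _ (by positivity)]
  rfl

end Plane

theorem AffineBasis.angle_ne_zero_of_coord_pos {ι V P : Type*} [NormedAddCommGroup V]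
    [InnerProductSpace ℝ V] [MetricSpace P] [NormedAddTorsor V P] (b : AffineBasis ι ℝ P)
    {i j k : ι} {p : P} (hij : i ≠ j) (hki : k ≠ i) (hkj : k ≠ j) (hp : 0 < b.coord k p) :
    ∠ (b i) p (b j) ≠ 0 := by
  intro h
  have hp_line : p ∈ line[ℝ, b i, b j] :=
    (collinear_of_angle_eq_zero h).mem_affineSpan_of_mem_of_ne (by simp) (by simp) (by simp)
      (b.ind.injective.ne hij)
  have hface : line[ℝ, b i, b j] ≤ (AffineSubspace.mk' (0 : ℝ) ⊥).comap (b.coord k) := by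
    rw [affineSpan_le]
    rintro _ (rfl | rfl) <;> simp [b.coord_apply_ne, hki, hkj]
  simpa [hp.ne'] using hface hp_line

section InnerProductSpace

variable {E : Type*} [NormedAddCommGroup E] [InnerProductSpace ℝ E]

theorem InnerProductGeometry.inner_normalize_normalize (x y : E) :
    ⟪normalize x, normalize y⟫ = cos (angle x y) := by
  rw [cos_angle, NormedSpace.normalize, NormedSpace.normalize, real_inner_smul_left,
    real_inner_smul_right]
  ring

theorem hasFDerivAt_norm_sub {a x : E} (h : x ≠ a) :
    HasFDerivAt (fun y => ‖y - a‖) (innerSL ℝ (normalize (x - a))) x := by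
  have hxa : ‖x - a‖ ^ 2 ≠ 0 := by simpa [sub_eq_zero] using h
  have hsqrt := (((hasFDerivAt_id x).sub_const a).norm_sq).sqrt hxa
  simp only [Real.sqrt_sq (norm_nonneg _)] at hsqrt
  refine hsqrt.congr_fderiv ?_
  ext d
  simp only [id_eq, one_div, mul_inv_rev, map_sub, ContinuousLinearMap.comp_id, smul_apply,
    sub_apply, coe_innerSL_apply, nsmul_eq_mul, Nat.cast_ofNat, smul_eq_mul,
    NormedSpace.normalize, map_smul]
  ring

theorem sum_smul_normalize_eq_zero_of_isLocalMin {ι : Type*} [Fintype ι] {A : ι → E}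
    {B : ι → ℝ} {p : E} (hp : ∀ i, p ≠ A i)
    (hmin : IsLocalMin (fun X => ∑ i, B i * ‖X - A i‖) p) :
    ∑ i, B i • normalize (A i - p) = 0 := by
  set g := ∑ i, B i • normalize (p - A i)
  have hderiv : HasFDerivAt (fun X => ∑ i, B i * ‖X - A i‖) (innerSL ℝ g) p := by
    simp only [g, map_sum, map_smul]
    exact HasFDerivAt.fun_sum fun i _ => (hasFDerivAt_norm_sub (hp i)).const_mul (B i)
  have hg : g = 0 := by
    simpa using congr($(hmin.hasFDerivAt_eq_zero hderiv) g)
  have hneg : ∀ i, normalize (A i - p) = -normalize (p - A i) := fun i => by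
    rw [← normalize_neg, neg_sub]
  rw [Finset.sum_congr rfl fun i _ => by rw [hneg, smul_neg], Finset.sum_neg_distrib]
  exact neg_eq_zero.2 hg

theorem eq_of_sum_smul_eq_zero_of_inner_eq {ι : Type*} [Fintype ι] {e : ι → E} {B : ι → ℝ}
    {c : ℝ} (he : ∀ i, ‖e i‖ = 1) (hc : ∀ i j, i ≠ j → ⟪e i, e j⟫ = c) (hc1 : c ≠ 1)
    (h : ∑ i, B i • e i = 0) (i j : ι) : B i = B j := by
  classical
  have hinner : ∀ i, (1 - c) * B i + c * ∑ j, B j = 0 := fun i => calc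
    _ = ∑ j, (c * B j + (1 - c) * if i = j then B j else 0) := by
      simp [Finset.sum_add_distrib, Finset.mul_sum, add_comm]
    _ = ⟪∑ j, B j • e j, e i⟫ := by
      simp only [sum_inner, real_inner_smul_left]
      refine Finset.sum_congr rfl fun j _ => ?_
      by_cases hij : i = j
      · simp only [hij, real_inner_self_eq_norm_sq, he, if_true]; ring
      · simp only [hij, hc j i (Ne.symm hij), if_false]; ring
    _ = 0 := by rw [h, inner_zero_left]
  exact mul_left_cancel₀ (sub_ne_zero.2 hc1.symm) (by linarith [hinner i, hinner j])

end InnerProductSpace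

theorem Real.cos_two_mul_pi_div_three : cos (2 * π / 3) = -(1 / 2) := by
  rw [show 2 * π / 3 = π - π / 3 by ring, cos_pi_sub, cos_pi_div_three]

/-- Indices are shifted: `A 0, A 1, A 2` are `A₁, A₂, A₃`. -/
theorem mixed_inverse_equilateral_angles_triangle
    (A : Fin 3 → EuclideanSpace ℝ (Fin 2))
    (hA : AffineIndependent ℝ A)
    (A₀ : EuclideanSpace ℝ (Fin 2))
    (hA₀ : A₀ ∈ interior (convexHull ℝ (Set.range A)))
    (h12 : ∠ (A 0) A₀ (A 1) = 2 * Real.pi / 3)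
    (h13 : ∠ (A 0) A₀ (A 2) = 2 * Real.pi / 3) :
    ∠ (A 1) A₀ (A 2) = 2 * Real.pi / 3 ∧
    ∀ B : Fin 3 → ℝ, (∀ i, 0 < B i) →
      B 0 + B 1 + B 2 = 1 →
      B 0 + B 1 = B 2 + 1/3 →
      (∀ X : EuclideanSpace ℝ (Fin 2),
        ∑ i, B i * ‖A₀ - A i‖ ≤ ∑ i, B i * ‖X - A i‖) →
      B 0 = 1/3 ∧ B 1 = 1/3 ∧ B 2 = 1/3 := by
  let b : AffineBasis (Fin 3) ℝ (EuclideanSpace ℝ (Fin 2)) :=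
    ⟨A, hA, hA.affineSpan_eq_top_iff_card_eq_finrank_add_one.2 (by simp)⟩
  have hcoord : ∀ i, 0 < b.coord i A₀ := (Set.ext_iff.1 b.interior_convexHull A₀).1 hA₀
  have hne : ∀ i, A i ≠ A₀ := fun i h => by
    have := hcoord (i + 1)
    rw [← h, show A i = b i from rfl, b.coord_apply_ne (by fin_cases i <;> decide)] at this
    exact lt_irrefl 0 this
  have : Fact (finrank ℝ (EuclideanSpace ℝ (Fin 2)) = 2) := ⟨finrank_euclideanSpace_fin⟩
  have h23 : ∠ (A 1) A₀ (A 2) = 2 * π / 3 := by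
    rcases angle_eq_zero_or_cos_eq_cos_two_mul_of_angle_eq (hne 0) (hne 1) (hne 2)
      (h12.trans h13.symm) with h | h
    · exact absurd h (b.angle_ne_zero_of_coord_pos (by decide) (by decide) (by decide) (hcoord 0))
    · refine injOn_cos ⟨EuclideanGeometry.angle_nonneg .., EuclideanGeometry.angle_le_pi ..⟩
        ⟨by positivity, by linarith [pi_pos]⟩ ?_
      rw [h, h12, show 2 * (2 * π / 3) = 2 * π - 2 * π / 3 by ring, cos_two_pi_sub]
  have hangle : ∀ i j, i ≠ j → ∠ (A i) A₀ (A j) = 2 * π / 3 := by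
    intro i j hij
    fin_cases i <;> fin_cases j <;>
      first | exact absurd rfl hij | assumption | (rw [EuclideanGeometry.angle_comm]; assumption)
  refine ⟨h23, fun B _ hsum _ hmin => ?_⟩
  have hunit : ∀ i j, i ≠ j → ⟪normalize (A i - A₀), normalize (A j - A₀)⟫ = -(1 / 2) :=
    fun i j hij => by
      rw [inner_normalize_normalize, ← cos_two_mul_pi_div_three]
      exact congrArg cos (hangle i j hij)
  have hequal := eq_of_sum_smul_eq_zero_of_inner_eq
    (fun i => norm_normalize_eq_one_iff.2 (sub_ne_zero.2 (hne i))) hunit (by norm_num)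
    (sum_smul_normalize_eq_zero_of_isLocalMin (fun i => (hne i).symm) (.of_forall hmin))
  refine ⟨?_, ?_, ?_⟩ <;> linarith [hequal 0 1, hequal 1 2]
end
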